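/- arXiv:2305.18115 — 11 statements merged into one kernel-verified Lean document; each statement's English description precedes it below -/
import Mathlib

section
/- Let M be a monoid. The graded set P(M) of M-pigmented words, equipped with the superposition maps and the projections, satisfies the three abstract-clone axioms: for all n, m, t ≥ 0, all p ∈ P(M)(n), q_1, …, q_n ∈ P(M)(m), r_1, …, r_m ∈ P(M)(t), and all i ∈ {1, …, n}: (i) 1_{i,n}⟨q_1, …, q_n⟩ = q_i; (ii) p⟨1_{1,n}, …, 1_{n,n}⟩ = p; (iii) (p⟨q_1, …, q_n⟩)⟨r_1, …, r_m⟩ = p⟨q_1⟨r_1, …, r_m⟩, …, q_n⟨r_1, …, r_m⟩⟩. -/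
/-- An `M`-pigmented word of arity `n`: a list of letters `(i, α)` whose value is
`i ∈ Fin n` (representing the value `i + 1 ∈ {1, …, n}`) and whose pigment is `α ∈ M`. -/
abbrev PW (M : Type*) (n : ℕ) : Type _ := List (Fin n × M)

/-- The superposition `p⟨q 0, …, q (n-1)⟩` of pigmented words. -/
def pwSuper {M : Type*} [Monoid M] {n m : ℕ} (p : PW M n) (q : Fin n → PW M m) : PW M m :=
  p.flatMap (fun l => (q l.1).map (fun x => (x.1, l.2 * x.2)))

/-- The projection `1_{i,n}`: the one-letter word `i^e`, where `e` is the unit of `M`. -/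
def pwProj {M : Type*} [Monoid M] {n : ℕ} (i : Fin n) : PW M n := [(i, 1)]

/-- The graded set of `M`-pigmented words, with superpositions and projections,
satisfies the three abstract-clone axioms. -/
theorem pigmentedWords_clone_axioms (M : Type*) [Monoid M] :
    (∀ (n m : ℕ) (i : Fin n) (q : Fin n → PW M m), pwSuper (pwProj i) q = q i) ∧
    (∀ (n : ℕ) (p : PW M n), pwSuper p (fun i => pwProj i) = p) ∧
    (∀ (n m t : ℕ) (p : PW M n) (q : Fin n → PW M m) (r : Fin m → PW M t),
      pwSuper (pwSuper p q) r = pwSuper p (fun i => pwSuper (q i) r)) := by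
  refine ⟨fun n m i q => ?_, fun n p => ?_, fun n m t p q r => ?_⟩
  · simp [pwSuper, pwProj]
  · induction p with
    | nil => rfl
    | cons h tl ih => simpa [pwSuper, pwProj] using ih
  · induction p with
    | nil => rfl
    | cons h tl ih =>
      simp [pwSuper, List.flatMap_cons, List.flatMap_append, List.flatMap_map, List.map_flatMap] at ih ⊢
      rw [ih]; congr 1
      congr 1; funext a; congr 1; funext x; simp [mul_assoc]
end

section
/- For any monoid M, the set G_M consisting of the empty word ε ∈ P(M)(0), the one-letter words 1^α ∈ P(M)(1) for all α ∈ M, and the word 1^e 2^e ∈ P(M)(2), generates the clone P(M): for every family S = (S(n))_{n ≥ 0} with S(n) ⊆ P(M)(n) that contains all projections 1_{i,n} and all elements of G_M and is closed under superposition (if p ∈ S(n) and q_1, …, q_n ∈ S(m) then p⟨q_1, …, q_n⟩ ∈ S(m)), one has S(n) = P(M)(n) for every n. -/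
/-- The set `G_M = {ε, 1^α (α ∈ M), 1^e 2^e}` generates the clone `P(M)`: every
family of subsets containing the projections and `G_M` and closed under
superposition is everything. -/
theorem pigmentedWords_generating_set (M : Type*) [Monoid M]
    (S : ∀ n : ℕ, Set (PW M n))
    (hproj : ∀ (n : ℕ) (i : Fin n), pwProj i ∈ S n)
    (hempty : ([] : PW M 0) ∈ S 0)
    (hone : ∀ α : M, ([((0 : Fin 1), α)] : PW M 1) ∈ S 1)
    (htwo : ([((0 : Fin 2), (1 : M)), ((1 : Fin 2), (1 : M))] : PW M 2) ∈ S 2)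
    (hsuper : ∀ (n m : ℕ) (p : PW M n) (q : Fin n → PW M m),
      p ∈ S n → (∀ i, q i ∈ S m) → pwSuper p q ∈ S m) :
    ∀ (n : ℕ) (p : PW M n), p ∈ S n := by
  intro n p
  induction p with
  | nil =>
    have h := hsuper 0 n [] (fun i => i.elim0) hempty (fun i => i.elim0)
    simpa [pwSuper] using h
  | cons l rest ih =>
    obtain ⟨i, α⟩ := l
    have h1 : ([(i, α)] : PW M n) ∈ S n := by
      have h := hsuper 1 n [((0 : Fin 1), α)] (fun _ => pwProj i) (hone α)
        (fun _ => hproj n i)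
      simpa [pwSuper, pwProj] using h
    have h := hsuper 2 n [((0 : Fin 2), (1 : M)), ((1 : Fin 2), (1 : M))]
      ![[(i, α)], rest] htwo (fun j => by fin_cases j <;> simpa using (by assumption : _))
    simpa [pwSuper] using h
end

section
/- Let M be a monoid, ≡ an arity-preserving family of equivalence relations on P(M), and 𝒫 a P-symbol for ≡. Then ≡ is a clone congruence of P(M) if and only if for every p ∈ P(M)(n) and q_1, …, q_n ∈ P(M)(m), one has p⟨q_1, …, q_n⟩ ≡ 𝒫(p)⟨𝒫(q_1), …, 𝒫(q_n)⟩. -/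
/-- A clone congruence of `P(M)`: an arity-indexed family of relations compatible
with the superposition maps. -/
def IsCloneCong {M : Type*} [Monoid M] (r : ∀ n, PW M n → PW M n → Prop) : Prop :=
  ∀ ⦃n m : ℕ⦄ ⦃p p' : PW M n⦄ ⦃q q' : Fin n → PW M m⦄,
    r n p p' → (∀ i, r m (q i) (q' i)) → r m (pwSuper p q) (pwSuper p' q')

/-- A `P`-symbol for the arity-preserving family of relations `r`: an arity-preserving
map `P` with `p ≡ P p` for all `p`, and `P p = P p'` whenever `p ≡ p'`. -/
def IsPSymbol {M : Type*} [Monoid M] (r : ∀ n, PW M n → PW M n → Prop)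
    (P : ∀ n, PW M n → PW M n) : Prop :=
  (∀ n p, r n p (P n p)) ∧ (∀ n p p', r n p p' → P n p = P n p')

/-- Given a `P`-symbol `P` for an arity-preserving family of equivalence relations `r`
on `P(M)`, the family `r` is a clone congruence if and only if every superposition is
`r`-equivalent to the superposition of the `P`-symbols of its arguments. -/
theorem cloneCongruence_iff_pSymbol_superposition (M : Type*) [Monoid M]
    (r : ∀ n, PW M n → PW M n → Prop) (hr : ∀ n, Equivalence (r n))
    (P : ∀ n, PW M n → PW M n) (hP : IsPSymbol r P) :
    IsCloneCong r ↔
      ∀ (n m : ℕ) (p : PW M n) (q : Fin n → PW M m),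
        r m (pwSuper p q) (pwSuper (P n p) (fun i => P m (q i))) := by
  obtain ⟨hP1, hP2⟩ := hP
  constructor
  · intro h n m p q
    exact h (hP1 n p) (fun i => hP1 m (q i))
  · intro h n m p p' q q' hpp' hqq'
    have h1 := h n m p q
    have h2 := h n m p' q'
    have e1 : P n p = P n p' := hP2 n p p' hpp'
    have e2 : (fun i => P m (q i)) = (fun i => P m (q' i)) := by
      funext i; exact hP2 m (q i) (q' i) (hqq' i)
    rw [e1, e2] at h1
    exact (hr m).trans h1 ((hr m).symm h2)
end

section
/- Let M be a monoid, let ≡_1 and ≡_2 be clone congruences of P(M), and let 𝒫_1 and 𝒫_2 be P-symbols for ≡_1 and ≡_2 respectively. If 𝒫_1 ∘ 𝒫_2 = 𝒫_2 ∘ 𝒫_1 =: 𝒫_{12}, and ≡ denotes the fiber equivalence relation of 𝒫_{12} (p ≡ p' iff 𝒫_{12}(p) = 𝒫_{12}(p')), then: (i) 𝒫_{12} is a P-symbol for ≡; (ii) ≡ is a clone congruence of P(M); (iii) ≡ is coarser than both ≡_1 and ≡_2, i.e., p ≡_1 p' implies p ≡ p' and p ≡_2 p' implies p ≡ p'. 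-/
/-- Composition of commuting `P`-symbols: if `P₁, P₂` are `P`-symbols for clone
congruences `r₁, r₂` and they commute, then `P₁₂ := P₁ ∘ P₂` is a `P`-symbol for its
fiber relation `≡`, the relation `≡` is a clone congruence, and `≡` is coarser than
both `r₁` and `r₂`. -/
theorem pSymbol_composition (M : Type*) [Monoid M]
    (r₁ r₂ : ∀ n, PW M n → PW M n → Prop)
    (hr₁ : ∀ n, Equivalence (r₁ n)) (hr₂ : ∀ n, Equivalence (r₂ n))
    (hc₁ : IsCloneCong r₁) (hc₂ : IsCloneCong r₂)
    (P₁ P₂ : ∀ n, PW M n → PW M n)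
    (hP₁ : IsPSymbol r₁ P₁) (hP₂ : IsPSymbol r₂ P₂)
    (hcomm : ∀ (n : ℕ) (p : PW M n), P₁ n (P₂ n p) = P₂ n (P₁ n p)) :
    IsPSymbol (fun n p p' => P₁ n (P₂ n p) = P₁ n (P₂ n p'))
        (fun n p => P₁ n (P₂ n p)) ∧
    IsCloneCong (fun n (p p' : PW M n) => P₁ n (P₂ n p) = P₁ n (P₂ n p')) ∧
    (∀ (n : ℕ) (p p' : PW M n), r₁ n p p' → P₁ n (P₂ n p) = P₁ n (P₂ n p')) ∧
    (∀ (n : ℕ) (p p' : PW M n), r₂ n p p' → P₁ n (P₂ n p) = P₁ n (P₂ n p')) := by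

  have id1 : ∀ n x, P₁ n (P₁ n x) = P₁ n x :=
    fun n x => (hP₁.2 n x (P₁ n x) (hP₁.1 n x)).symm
  have id2 : ∀ n x, P₂ n (P₂ n x) = P₂ n x :=
    fun n x => (hP₂.2 n x (P₂ n x) (hP₂.1 n x)).symm
  have hA : ∀ {n m : ℕ} (p : PW M n) (q : Fin n → PW M m),
      P₂ m (pwSuper p q) = P₂ m (pwSuper (P₂ n p) (fun i => P₂ m (q i))) :=
    fun {n m} p q => hP₂.2 m _ _ (hc₂ (hP₂.1 n p) (fun i => hP₂.1 m (q i)))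
  have hB : ∀ {n m : ℕ} (p : PW M n) (q : Fin n → PW M m),
      P₁ m (pwSuper p q) = P₁ m (pwSuper (P₁ n p) (fun i => P₁ m (q i))) :=
    fun {n m} p q => hP₁.2 m _ _ (hc₁ (hP₁.1 n p) (fun i => hP₁.1 m (q i)))
  have key : ∀ {n m : ℕ} (p : PW M n) (q : Fin n → PW M m),
      P₁ m (P₂ m (pwSuper p q)) =
        P₂ m (P₁ m (pwSuper (P₁ n (P₂ n p)) (fun i => P₁ m (P₂ m (q i))))) := by
    intro n m p q
    calc P₁ m (P₂ m (pwSuper p q))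
        = P₁ m (P₂ m (pwSuper (P₂ n p) (fun i => P₂ m (q i)))) := by rw [hA]
      _ = P₂ m (P₁ m (pwSuper (P₂ n p) (fun i => P₂ m (q i)))) := hcomm m _
      _ = P₂ m (P₁ m (pwSuper (P₁ n (P₂ n p)) (fun i => P₁ m (P₂ m (q i))))) := by
          rw [← hB]
  refine ⟨⟨fun n p => ?_, fun n p p' h => h⟩, ?_, ?_, ?_⟩
  · show P₁ n (P₂ n p) = P₁ n (P₂ n (P₁ n (P₂ n p)))
    rw [hcomm n (P₁ n (P₂ n p)), id1, ← hcomm, id2]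
  · intro n m p p' q q' hp hq
    simp only at hp hq ⊢
    rw [key p q, key p' q', hp]
    congr 1
    congr 1
    congr 1
    funext i
    exact hq i
  · intro n p p' h
    have := hP₁.2 n p p' h
    rw [hcomm, hcomm, this]
  · intro n p p' h
    rw [hP₂.2 n p p' h]
end

section
/- For any monoid M, the relation ≡_sort is a clone congruence of P(M): if p' is a permutation of p (they are both in P(M)(n)) and, for each 1 ≤ j ≤ n, q'_j is a permutation of q_j (both in P(M)(m)), then p'⟨q'_1, …, q'_n⟩ is a permutation of p⟨q_1, …, q_n⟩. -/
/-- The relation `≡_sort` (being a permutation of each other) is a clone congruence of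
`P(M)`: superposition of permutations is a permutation of the superposition. -/
theorem perm_cloneCongruence (M : Type*) [Monoid M] (n m : ℕ)
    (p p' : PW M n) (q q' : Fin n → PW M m)
    (hp : p'.Perm p) (hq : ∀ i, (q' i).Perm (q i)) :
    (pwSuper p' q').Perm (pwSuper p q) := by
  unfold pwSuper
  exact Trans.trans (hp.flatMap_right _)
    (List.Perm.flatMap_left _ (fun a _ => ((hq a.1).map _)))
end

section
/- For any monoid M and any k ≥ 0, the fiber relation ≡_{first_k} of the map first_k, defined on each P(M)(n) by p ≡_{first_k} p' iff first_k(p) = first_k(p'), is a clone congruence of P(M). -/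
/-- `firstKAux k pre p` keeps those letters of `p` whose position is a left
`k`-witness, given that the prefix `pre` has already been read. -/
def firstKAux {M : Type*} {n : ℕ} (k : ℕ) : PW M n → PW M n → PW M n
  | _, [] => []
  | pre, l :: t =>
    if pre.countP (fun x => decide (x.1 = l.1)) < k
    then l :: firstKAux k (pre ++ [l]) t
    else firstKAux k (pre ++ [l]) t

/-- `firstK k p` keeps, for each value, the first `k` occurrences of that value in `p`
(the letters at left `k`-witness positions). -/
def firstK {M : Type*} {n : ℕ} (k : ℕ) (p : PW M n) : PW M n := firstKAux k [] p

namespace FKAux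
set_option linter.unusedSectionVars false

variable {M : Type*} [Monoid M] {n m : ℕ}

/-- count of letters with value `v`. -/
def cntv {M : Type*} {n : ℕ} (v : Fin n) (p : PW M n) : ℕ :=
  p.countP (fun x => decide (x.1 = v))

@[simp] lemma cntv_nil (v : Fin n) : cntv v ([] : PW M n) = 0 := rfl

lemma cntv_cons (v : Fin n) (l : Fin n × M) (t : PW M n) :
    cntv v (l :: t) = cntv v t + (if l.1 = v then 1 else 0) := by
  simp [cntv, List.countP_cons]

def bump {n : ℕ} (c : Fin n → ℕ) (i : Fin n) : Fin n → ℕ :=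
  fun v => if v = i then c v + 1 else c v

lemma bump_apply (c : Fin n → ℕ) (i v : Fin n) :
    bump c i v = if v = i then c v + 1 else c v := rfl

/-- state-based version of `firstKAux`. -/
def faux {M : Type*} {n : ℕ} (k : ℕ) : (Fin n → ℕ) → PW M n → PW M n
  | _, [] => []
  | c, l :: t => if c l.1 < k then l :: faux k (bump c l.1) t else faux k (bump c l.1) t

@[simp] lemma faux_nil (k : ℕ) (c : Fin n → ℕ) : faux k c ([] : PW M n) = [] := rfl

lemma faux_cons (k : ℕ) (c : Fin n → ℕ) (l : Fin n × M) (t : PW M n) :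
    faux k c (l :: t) =
      if c l.1 < k then l :: faux k (bump c l.1) t else faux k (bump c l.1) t := rfl

lemma firstKAux_eq (k : ℕ) (p : PW M n) : ∀ pre : PW M n,
    firstKAux k pre p = faux k (fun v => cntv v pre) p := by
  induction p with
  | nil => intro pre; rfl
  | cons l t ih =>
    intro pre
    have hc : (fun v => cntv v (pre ++ [l])) = bump (fun v => cntv v pre) l.1 := by
      funext v
      rw [bump_apply]
      simp only [cntv, List.countP_append]
      by_cases h : v = l.1
      · simp [h, List.countP_cons]
      · simp [h, Ne.symm h, List.countP_cons]
    show (if pre.countP (fun x => decide (x.1 = l.1)) < k then _ else _) = _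
    rw [faux_cons]
    have : pre.countP (fun x => decide (x.1 = l.1)) = cntv l.1 pre := rfl
    rw [this, ih, hc]

lemma firstK_eq (k : ℕ) (p : PW M n) : firstK k p = faux k (fun _ => 0) p := by
  have : (fun v => cntv v ([] : PW M n)) = (fun _ => (0 : ℕ)) := by funext v; simp
  rw [firstK, firstKAux_eq, this]

lemma faux_congr (k : ℕ) (p : PW M n) : ∀ c c' : Fin n → ℕ,
    (∀ v, min k (c v) = min k (c' v)) → faux k c p = faux k c' p := by
  induction p with
  | nil => intros; rfl
  | cons l t ih =>
    intro c c' h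
    have hcond : (c l.1 < k) ↔ (c' l.1 < k) := by have := h l.1; omega
    have hb : ∀ v, min k (bump c l.1 v) = min k (bump c' l.1 v) := by
      intro v
      rw [bump_apply, bump_apply]
      have h1 := h v
      by_cases hv : v = l.1
      · rw [if_pos hv, if_pos hv]; omega
      · rw [if_neg hv, if_neg hv]; omega
    rw [faux_cons, faux_cons]
    by_cases hcl : c l.1 < k
    · rw [if_pos hcl, if_pos (hcond.mp hcl), ih _ _ hb]
    · rw [if_neg hcl, if_neg (fun h' => hcl (hcond.mpr h')), ih _ _ hb]

lemma faux_append (k : ℕ) (p : PW M n) : ∀ (c : Fin n → ℕ) (q : PW M n),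
    faux k c (p ++ q) = faux k c p ++ faux k (fun v => c v + cntv v p) q := by
  induction p with
  | nil =>
    intro c q
    have : (fun v => c v + cntv v ([] : PW M n)) = c := by funext v; simp
    simp [this]
  | cons l t ih =>
    intro c q
    have hc : (fun v => bump c l.1 v + cntv v t) = (fun v => c v + cntv v (l :: t)) := by
      funext v
      rw [bump_apply, cntv_cons]
      by_cases hv : v = l.1
      · rw [if_pos hv, if_pos hv.symm]; omega
      · rw [if_neg hv, if_neg (fun h' : l.1 = v => hv h'.symm)]; omega
    rw [List.cons_append, faux_cons, faux_cons]
    by_cases hcl : c l.1 < k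
    · rw [if_pos hcl, if_pos hcl, ih, hc, List.cons_append]
    · rw [if_neg hcl, if_neg hcl, ih, hc]

lemma cntv_faux (k : ℕ) (p : PW M n) : ∀ (c : Fin n → ℕ) (v : Fin n),
    min k (c v + cntv v (faux k c p)) = min k (c v + cntv v p) := by
  induction p with
  | nil => intros; rfl
  | cons l t ih =>
    intro c v
    have hthis := ih (bump c l.1) v
    rw [bump_apply] at hthis
    rw [faux_cons]
    by_cases hcl : c l.1 < k
    · rw [if_pos hcl, cntv_cons, cntv_cons]
      by_cases hv : v = l.1
      · rw [if_pos hv] at hthis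
        rw [if_pos hv.symm]
        omega
      · rw [if_neg hv] at hthis
        rw [if_neg (fun h' : l.1 = v => hv h'.symm)]
        omega
    · rw [if_neg hcl, cntv_cons]
      by_cases hv : v = l.1
      · have hcv : k ≤ c v := by rw [hv]; omega
        rw [if_pos hv.symm]
        omega
      · rw [if_neg hv] at hthis
        rw [if_neg (fun h' : l.1 = v => hv h'.symm)]
        omega

lemma faux_absorb (k : ℕ) (p : PW M n) : ∀ c c' : Fin n → ℕ,
    (∀ v, min k (c' v) ≤ c v) → faux k c (faux k c' p) = faux k c p := by
  induction p with
  | nil => intros; rfl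
  | cons l t ih =>
    intro c c' h
    have hb : ∀ v, min k (bump c' l.1 v) ≤ bump c l.1 v := by
      intro v
      rw [bump_apply, bump_apply]
      have h1 := h v
      by_cases hv : v = l.1
      · rw [if_pos hv, if_pos hv]; omega
      · rw [if_neg hv, if_neg hv]; omega
    rw [show faux k c' (l :: t) = if c' l.1 < k then l :: faux k (bump c' l.1) t else faux k (bump c' l.1) t from rfl]
    by_cases h1 : c' l.1 < k
    · rw [if_pos h1, faux_cons k c, faux_cons k c]
      by_cases h2 : c l.1 < k
      · rw [if_pos h2, if_pos h2, ih _ _ hb]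
      · rw [if_neg h2, if_neg h2, ih _ _ hb]
    · rw [if_neg h1]
      have h2 : ¬ c l.1 < k := by have := h l.1; omega
      have hcongr : ∀ x : PW M n, faux k c x = faux k (bump c l.1) x := by
        intro x
        apply faux_congr
        intro v
        rw [bump_apply]
        by_cases hv : v = l.1
        · rw [if_pos hv]; rw [hv]; omega
        · rw [if_neg hv]
      rw [faux_cons k c, if_neg h2, hcongr, ih _ _ hb]

lemma faux_map (k : ℕ) (α : M) (w : PW M n) : ∀ c : Fin n → ℕ,
    faux k c (w.map (fun x => (x.1, α * x.2))) =
      (faux k c w).map (fun x => (x.1, α * x.2)) := by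
  induction w with
  | nil => intro c; rfl
  | cons l t ih =>
    intro c
    simp only [List.map_cons, faux_cons]
    by_cases hcl : c l.1 < k
    · simp only [if_pos hcl, ih, List.map_cons]
    · simp only [if_neg hcl, ih]

lemma cntv_map (α : M) (w : PW M n) (v : Fin n) :
    cntv v (w.map (fun x => (x.1, α * x.2))) = cntv v w := by
  simp only [cntv, List.countP_map]
  rfl

lemma faux_eq_nil (k : ℕ) (b : PW M n) : ∀ c : Fin n → ℕ,
    (∀ v, 0 < cntv v b → k ≤ c v) → faux k c b = [] := by
  induction b with
  | nil => intros; rfl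
  | cons l t ih =>
    intro c h
    have h1 : k ≤ c l.1 := h l.1 (by rw [cntv_cons]; simp)
    rw [faux_cons, if_neg (by omega)]
    apply ih
    intro v hv
    have h2 := h v (by rw [cntv_cons]; omega)
    rw [bump_apply]
    by_cases hv2 : v = l.1
    · rw [if_pos hv2]; omega
    · rw [if_neg hv2]; omega

lemma super_nil (q : Fin n → PW M m) : pwSuper ([] : PW M n) q = [] := rfl

lemma super_cons (l : Fin n × M) (t : PW M n) (q : Fin n → PW M m) :
    pwSuper (l :: t) q = (q l.1).map (fun x => (x.1, l.2 * x.2)) ++ pwSuper t q := by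
  simp [pwSuper]

/-- replacing the arguments `q` by `≡`-equivalent ones. -/
lemma super_q (k : ℕ) (q q' : Fin n → PW M m)
    (hq : ∀ i, faux k (fun _ => 0) (q i) = faux k (fun _ => 0) (q' i))
    (p : PW M n) : ∀ c c' : Fin m → ℕ, (∀ v, min k (c v) = min k (c' v)) →
    faux k c (pwSuper p q) = faux k c' (pwSuper p q') := by
  induction p with
  | nil => intros; rfl
  | cons l t ih =>
    intro c c' h
    have hz : ∀ v : Fin m, min k ((fun _ => (0:ℕ)) v) ≤ c v := by
      intro v; simp
    have hbb : faux k (fun _ => 0) ((q l.1).map (fun x => (x.1, l.2 * x.2))) =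
        faux k (fun _ => 0) ((q' l.1).map (fun x => (x.1, l.2 * x.2))) := by
      rw [faux_map, faux_map, hq]
    have h1 : faux k c ((q l.1).map (fun x => (x.1, l.2 * x.2))) =
        faux k c' ((q' l.1).map (fun x => (x.1, l.2 * x.2))) := by
      rw [← faux_absorb k ((q l.1).map (fun x => (x.1, l.2 * x.2))) c _ hz, hbb,
        faux_absorb k ((q' l.1).map (fun x => (x.1, l.2 * x.2))) c _ hz,
        faux_congr k ((q' l.1).map (fun x => (x.1, l.2 * x.2))) c c' h]
    have hcnt : ∀ v, min k (cntv v ((q l.1).map (fun x => (x.1, l.2 * x.2)))) =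
        min k (cntv v ((q' l.1).map (fun x => (x.1, l.2 * x.2)))) := by
      intro v
      have e1 := cntv_faux k ((q l.1).map (fun x => (x.1, l.2 * x.2))) (fun _ => 0) v
      have e2 := cntv_faux k ((q' l.1).map (fun x => (x.1, l.2 * x.2))) (fun _ => 0) v
      rw [hbb] at e1
      simp only [zero_add] at e1 e2
      exact e1.symm.trans e2
    rw [super_cons, super_cons, faux_append, faux_append, h1]
    congr 1
    apply ih
    intro v
    have h2 := hcnt v
    have h3 := h v
    omega

/-- replacing `p` by `faux k d p`. -/
lemma super_p (k : ℕ) (q : Fin n → PW M m) (p : PW M n) :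
    ∀ (d : Fin n → ℕ) (c c' : Fin m → ℕ),
    (∀ v, min k (c v) = min k (c' v)) →
    (∀ i v, 0 < cntv v (q i) → min k (d i) ≤ min k (c v)) →
    faux k c (pwSuper p q) = faux k c' (pwSuper (faux k d p) q) := by
  induction p with
  | nil => intros; rfl
  | cons l t ih =>
    intro d c c' h hinv
    have hcntb : ∀ v, cntv v ((q l.1).map (fun x => (x.1, l.2 * x.2))) = cntv v (q l.1) :=
      fun v => cntv_map l.2 (q l.1) v
    rw [faux_cons]
    by_cases hdl : d l.1 < k
    · rw [if_pos hdl, super_cons, super_cons, faux_append, faux_append]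
      congr 1
      · exact faux_congr k ((q l.1).map (fun x => (x.1, l.2 * x.2))) c c' h
      · apply ih
        · intro v
          have h3 := h v
          have h4 := hcntb v
          omega
        · intro i v hv
          have h0 := hinv i v hv
          have h4 := hcntb v
          rw [bump_apply]
          by_cases hi : i = l.1
          · rw [if_pos hi]
            have hb1 : 0 < cntv v (q l.1) := by rw [← hi]; exact hv
            have hd : min k (d l.1) ≤ min k (c v) := hinv l.1 v hb1
            rw [hi]
            omega
          · rw [if_neg hi]; omega
    · rw [if_neg hdl, super_cons, faux_append]
      have hbig : ∀ v, 0 < cntv v ((q l.1).map (fun x => (x.1, l.2 * x.2))) → k ≤ c v := by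
        intro v hv
        rw [hcntb] at hv
        have := hinv l.1 v hv
        omega
      rw [faux_eq_nil k ((q l.1).map (fun x => (x.1, l.2 * x.2))) c hbig, List.nil_append]
      apply ih
      · intro v
        have h3 := h v
        by_cases hv : 0 < cntv v ((q l.1).map (fun x => (x.1, l.2 * x.2)))
        · have := hbig v hv; omega
        · have : cntv v ((q l.1).map (fun x => (x.1, l.2 * x.2))) = 0 := by omega
          omega
      · intro i v hv
        have h0 := hinv i v hv
        rw [bump_apply]
        by_cases hi : i = l.1
        · rw [if_pos hi]
          have hk : k ≤ c v := hbig v (by rw [hcntb, ← hi]; exact hv)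
          omega
        · rw [if_neg hi]; omega

end FKAux

/-- For every `k ≥ 0`, the fiber relation of `firstK k` is a clone congruence of
`P(M)`. -/
theorem firstK_fiber_cloneCongruence (M : Type*) [Monoid M] (k : ℕ) :
    (∀ n, Equivalence (fun p p' : PW M n => firstK k p = firstK k p')) ∧
    IsCloneCong (fun n (p p' : PW M n) => firstK k p = firstK k p') := by
  constructor
  · intro n
    exact ⟨fun _ => rfl, fun h => h.symm, fun h1 h2 => h1.trans h2⟩
  · intro n m p p' q q' hp hq
    simp only [FKAux.firstK_eq] at hp hq ⊢
    have hzero : ∀ v : Fin m, min k ((fun _ => (0:ℕ)) v) = min k ((fun _ => (0:ℕ)) v) :=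
      fun _ => rfl
    have hinv : ∀ (i : Fin n) (v : Fin m), 0 < FKAux.cntv v (q i) →
        min k ((fun _ => (0:ℕ)) i) ≤ min k ((fun _ => (0:ℕ)) v) := by
      intro i v _; exact le_refl _
    calc FKAux.faux k (fun _ => 0) (pwSuper p q)
        = FKAux.faux k (fun _ => 0) (pwSuper (FKAux.faux k (fun _ => 0) p) q) :=
          FKAux.super_p k q p _ _ _ hzero hinv
      _ = FKAux.faux k (fun _ => 0) (pwSuper (FKAux.faux k (fun _ => 0) p') q) := by rw [hp]
      _ = FKAux.faux k (fun _ => 0) (pwSuper p' q) :=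
          (FKAux.super_p k q p' _ _ _ hzero hinv).symm
      _ = FKAux.faux k (fun _ => 0) (pwSuper p' q') :=
          FKAux.super_q k q q' hq p' _ _ hzero
end

section
/- Let M be a monoid equipped with a linear order ≤, and let k ≥ 1. The maps sort_≤ and first_k on M-pigmented words commute (sort_≤(first_k(p)) = first_k(sort_≤(p)) for every M-pigmented word p) if and only if M is trivial, i.e., M has exactly one element. -/
/-- The order on pigmented letters: compare values first, then pigments. -/
def letterLE {M : Type*} [LinearOrder M] {n : ℕ} (a b : Fin n × M) : Prop :=
  a.1 < b.1 ∨ (a.1 = b.1 ∧ a.2 ≤ b.2)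

instance {M : Type*} [LinearOrder M] {n : ℕ} : DecidableRel (letterLE (M := M) (n := n)) :=
  fun a b => by unfold letterLE; infer_instance

/-- `sortW p` is the weakly increasing rearrangement of `p` for the letter order. -/
def sortW {M : Type*} [LinearOrder M] {n : ℕ} (p : PW M n) : PW M n :=
  p.insertionSort letterLE

/-!
When `M` is trivial a letter is determined by its value, so `sortW (firstK k p)` and
`firstK k (sortW p)` are both sorted (the latter as a sublist of a sorted word) and contain
`min k (#occurrences in p)` letters of each value; a sorted word is determined by its letter
counts. Conversely, if `a < b` in `M`, the word `1^b (1^a)^k` shows that the two maps differ: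
`first_k` keeps `1^b` before sorting, but sorting moves it behind the `k` letters `1^a`, after
which `first_k` drops it.
-/

section LetterOrder

variable {M : Type*} [LinearOrder M] {n : ℕ}

instance : IsTrans (Fin n × M) letterLE where
  trans := by
    rintro a b c (h₁ | ⟨h₁, h₁'⟩) (h₂ | ⟨h₂, h₂'⟩)
    · exact Or.inl (h₁.trans h₂)
    · exact Or.inl (h₂ ▸ h₁)
    · exact Or.inl (h₁ ▸ h₂)
    · exact Or.inr ⟨h₁.trans h₂, h₁'.trans h₂'⟩

instance : Std.Total (letterLE (M := M) (n := n)) where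
  total a b := by
    rcases lt_trichotomy a.1 b.1 with h | h | h
    · exact Or.inl (Or.inl h)
    · exact (le_total a.2 b.2).imp (fun h' => Or.inr ⟨h, h'⟩) (fun h' => Or.inr ⟨h.symm, h'⟩)
    · exact Or.inr (Or.inl h)

instance : Std.Antisymm (letterLE (M := M) (n := n)) where
  antisymm := by
    rintro a b (h₁ | ⟨h₁, h₁'⟩) (h₂ | ⟨h₂, h₂'⟩)
    · exact absurd (h₁.trans h₂) (lt_irrefl _)
    · exact absurd h₁ (h₂ ▸ lt_irrefl _)
    · exact absurd h₂ (h₁ ▸ lt_irrefl _)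
    · exact Prod.ext h₁ (le_antisymm h₁' h₂')

theorem pairwise_sortW (p : PW M n) : (sortW p).Pairwise letterLE :=
  List.pairwise_insertionSort letterLE p

theorem sortW_perm (p : PW M n) : (sortW p).Perm p :=
  List.perm_insertionSort letterLE p

theorem sortW_eq_of_perm {p q : PW M n} (hqp : q.Perm p) (hq : q.Pairwise letterLE) :
    sortW p = q :=
  ((sortW_perm p).trans hqp.symm).eq_of_pairwise' (pairwise_sortW p) hq

end LetterOrder

section FirstK

variable {M : Type*} {n : ℕ} (k : ℕ)

theorem firstKAux_sublist : ∀ (pre p : PW M n), (firstKAux k pre p).Sublist p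
  | _, [] => List.Sublist.refl _
  | pre, l :: t => by
    unfold firstKAux
    split
    · exact (firstKAux_sublist (pre ++ [l]) t).cons_cons l
    · exact (firstKAux_sublist (pre ++ [l]) t).cons l

theorem firstK_sublist (p : PW M n) : (firstK k p).Sublist p :=
  firstKAux_sublist k [] p

theorem firstKAux_append :
    ∀ (pre p q : PW M n), firstKAux k pre (p ++ q) = firstKAux k pre p ++ firstKAux k (pre ++ p) q
  | _, [], _ => by simp [firstKAux]
  | pre, l :: t, q => by
    simp only [List.cons_append, firstKAux, firstKAux_append (pre ++ [l]) t q,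
      List.append_assoc]
    split <;> rfl

theorem firstK_append_singleton (p : PW M n) (x : Fin n × M) :
    firstK k (p ++ [x]) =
      firstK k p ++ if p.countP (fun y => decide (y.1 = x.1)) < k then [x] else [] := by
  simp only [firstK, firstKAux_append, List.nil_append, firstKAux]

theorem mem_firstK_cons (hk : 0 < k) (x : Fin n × M) (p : PW M n) : x ∈ firstK k (x :: p) := by
  simp [firstK, firstKAux, hk]

theorem countP_firstK (v : Fin n) (p : PW M n) :
    (firstK k p).countP (fun y => decide (y.1 = v)) =
      min k (p.countP (fun y => decide (y.1 = v))) := by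
  induction p using List.reverseRecOn with
  | nil => simp [firstK, firstKAux]
  | append_singleton p x ih =>
    rw [firstK_append_singleton, List.countP_append, List.countP_append, ih]
    by_cases hx : x.1 = v
    · subst hx
      split <;> simp <;> omega
    · split <;> simp [hx]

end FirstK

section Commutation

variable {M : Type*} [LinearOrder M] {n : ℕ} (k : ℕ)

theorem sortW_firstK_comm_of_subsingleton [Subsingleton M] (p : PW M n) :
    sortW (firstK k p) = firstK k (sortW p) := by
  have count_eq_countP_value : ∀ (q : PW M n) (x : Fin n × M),
      q.count x = q.countP (fun y => decide (y.1 = x.1)) := fun q x => by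
    rw [List.count_eq_countP]
    refine List.countP_congr fun y _ => ?_
    simp only [beq_iff_eq, decide_eq_true_eq]
    exact ⟨congrArg Prod.fst, fun h => Prod.ext h (Subsingleton.elim _ _)⟩
  refine sortW_eq_of_perm ?_ ((pairwise_sortW p).sublist (firstK_sublist k _))
  refine List.perm_iff_count.mpr fun x => ?_
  simp only [count_eq_countP_value, countP_firstK, (sortW_perm p).countP_eq]

theorem sortW_firstK_ne_of_lt (hk : 0 < k) {a b : M} (hab : a < b) :
    sortW (firstK k ((0, b) :: List.replicate k (0, a)) : PW M 1) ≠
      firstK k (sortW ((0, b) :: List.replicate k (0, a))) := by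
  set x : Fin 1 × M := (0, b)
  set y : Fin 1 × M := (0, a)
  have hyx : letterLE y x := Or.inr ⟨rfl, hab.le⟩
  have hsort : sortW (x :: List.replicate k y) = List.replicate k y ++ [x] :=
    sortW_eq_of_perm (List.perm_append_singleton _ _)
      (List.pairwise_append.mpr ⟨List.pairwise_replicate.mpr (Or.inr (Or.inr ⟨rfl, le_rfl⟩)),
        List.pairwise_singleton _ _, by simp [hyx]⟩)
  have hx_notMem : x ∉ firstK k (List.replicate k y ++ [x]) := by
    rw [firstK_append_singleton, if_neg (by simp [List.countP_replicate, y, x])]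
    exact fun hx => hab.ne' (congrArg Prod.snd
      (List.eq_of_mem_replicate ((firstK_sublist k _).subset (by simpa using hx))))
  intro h
  rw [hsort] at h
  exact hx_notMem (h ▸ (sortW_perm _).mem_iff.mpr (mem_firstK_cons k hk x _))

end Commutation

theorem sort_firstK_commute_iff_trivial_general (M : Type*) [LinearOrder M]
    (k : ℕ) (hk : 1 ≤ k) :
    (∀ (n : ℕ) (p : PW M n), sortW (firstK k p) = firstK k (sortW p)) ↔
      (∀ a b : M, a = b) := by
  constructor
  · intro h a b
    by_contra hab
    rcases lt_or_gt_of_ne hab with hab | hab <;> exact sortW_firstK_ne_of_lt k hk hab (h 1 _)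
  · intro h n p
    have : Subsingleton M := ⟨h⟩
    exact sortW_firstK_comm_of_subsingleton k p

/-- For `k ≥ 1`, the maps `sortW` and `firstK k` commute on all `M`-pigmented words if
and only if the monoid `M` is trivial (it has exactly one element). -/
theorem sort_firstK_commute_iff_trivial (M : Type*) [Monoid M] [LinearOrder M]
    (k : ℕ) (hk : 1 ≤ k) :
    (∀ (n : ℕ) (p : PW M n), sortW (firstK k p) = firstK k (sortW p)) ↔
      (∀ a b : M, a = b) :=
  sort_firstK_commute_iff_trivial_general M k hk
end

section
/- For any monoid M, the relation ≡_sort (p ≡_sort p' iff p' is a permutation of p) is the smallest clone congruence of P(M) relating the words 1^e 2^e and 2^e 1^e of P(M)(2): ≡_sort is a clone congruence with 1^e 2^e ≡_sort 2^e 1^e, and every clone congruence ≈ of P(M) with 1^e 2^e ≈ 2^e 1^e contains ≡_sort (p ≡_sort p' implies p ≈ p'). -/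
/-- The relation `≡_sort` (being permutations of each other) is the smallest clone
congruence of `P(M)` relating `1^e 2^e` with `2^e 1^e`. -/
theorem perm_smallest_cloneCongruence (M : Type*) [Monoid M] :
    (∀ n, Equivalence (fun p p' : PW M n => p.Perm p')) ∧
    IsCloneCong (fun n (p p' : PW M n) => p.Perm p') ∧
    List.Perm ([((0 : Fin 2), (1 : M)), ((1 : Fin 2), (1 : M))] : PW M 2)
      [((1 : Fin 2), (1 : M)), ((0 : Fin 2), (1 : M))] ∧
    (∀ r : ∀ n, PW M n → PW M n → Prop, (∀ n, Equivalence (r n)) → IsCloneCong r →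
      r 2 [((0 : Fin 2), (1 : M)), ((1 : Fin 2), (1 : M))]
        [((1 : Fin 2), (1 : M)), ((0 : Fin 2), (1 : M))] →
      ∀ (n : ℕ) (p p' : PW M n), p.Perm p' → r n p p') := by
  refine ⟨fun n => ⟨List.Perm.refl, List.Perm.symm, List.Perm.trans⟩, ?_, .swap _ _ _, ?_⟩
  · intro n m p p' q q' hp hq
    exact (List.Perm.flatMap_left p (fun a _ => (hq a.1).map _)).trans
      (hp.flatMap_right _)
  · intro r hequiv hcong hswap n p p' hperm
    -- concatenation congruence
    have hcat : ∀ (a b a' b' : PW M n), r n a a' → r n b b' → r n (a ++ b) (a' ++ b') := by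
      intro a b a' b' ha hb
      have := hcong ((hequiv 2).refl [((0 : Fin 2), (1 : M)), ((1 : Fin 2), (1 : M))])
        (q := fun i : Fin 2 => if i = 0 then a else b)
        (q' := fun i : Fin 2 => if i = 0 then a' else b')
        (fun i => by fin_cases i <;> simpa)
      simpa [pwSuper, List.map_id''] using this
    induction hperm with
    | nil => exact (hequiv n).refl []
    | cons x _ ih => exact hcat [x] _ [x] _ ((hequiv n).refl [x]) ih
    | swap x y l =>
      have hxy : r n [y, x] [x, y] := by
        have := hcong hswap (q := fun i : Fin 2 => if i = 0 then [y] else [x])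
          (q' := fun i : Fin 2 => if i = 0 then [y] else [x])
          (fun i => (hequiv n).refl _)
        simpa [pwSuper] using this
      exact hcat [y, x] l [x, y] l hxy ((hequiv n).refl l)
    | trans _ _ ih1 ih2 => exact (hequiv n).trans ih1 ih2
end

section
/- Let E = {e} be the trivial monoid and k ≥ 0. The relation ≡ on E-pigmented words defined by p ≡ p' iff for every value i, min(|p|_i, k) = min(|p'|_i, k), where |p|_i denotes the number of letters of p with value i, is the smallest clone congruence of P(E) relating 1^e 2^e with 2^e 1^e (in arity 2) and (1^e)^{k+1} with (1^e)^k (in arity 1): ≡ is a clone congruence relating these pairs, and every clone congruence of P(E) relating these pairs contains ≡. -/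
/-- The number of letters of `p` whose value is `i`. -/
def countV {M : Type*} {n : ℕ} (p : PW M n) (i : Fin n) : ℕ :=
  p.countP (fun x => decide (x.1 = i))

universe u

theorem min_mul_min_min (a b k : ℕ) : min (min a k * min b k) k = min (a * b) k := by
  rcases Nat.eq_zero_or_pos a with rfl | ha; · simp
  rcases Nat.eq_zero_or_pos b with rfl | hb; · simp
  rcases le_total a k with hak | hka <;> rcases le_total b k with hbk | hkb
  · rw [min_eq_left hak, min_eq_left hbk]
  · rw [min_eq_left hak, min_eq_right hkb, min_eq_right (Nat.le_mul_of_pos_left k ha),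
      min_eq_right (hkb.trans (Nat.le_mul_of_pos_left b ha))]
  · rw [min_eq_right hka, min_eq_left hbk, min_eq_right (Nat.le_mul_of_pos_right k hb),
      min_eq_right (hka.trans (Nat.le_mul_of_pos_right a hb))]
  · rw [min_eq_right hka, min_eq_right hkb, min_eq_right (Nat.le_mul_self k),
      min_eq_right (hka.trans (Nat.le_mul_of_pos_right a hb))]

def truncRingCon (k : ℕ) : RingCon ℕ where
  r a b := min a k = min b k
  iseqv := ⟨fun _ => rfl, Eq.symm, Eq.trans⟩
  add' _ _ := by omega
  mul' {a b c d} hab hcd := by rw [← min_mul_min_min a, hab, hcd, min_mul_min_min]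

section Counting

variable {M : Type*} {n : ℕ}

theorem countV_append (a b : PW M n) (i : Fin n) :
    countV (a ++ b) i = countV a i + countV b i :=
  List.countP_append

theorem countV_cons (x : Fin n × M) (w : PW M n) (i : Fin n) :
    countV (x :: w) i = countV w i + if x.1 = i then 1 else 0 := by
  simp [countV, List.countP_cons]

theorem countV_replicate (c : ℕ) (x : Fin n × M) (i : Fin n) :
    countV (List.replicate c x) i = if x.1 = i then c else 0 := by
  simp [countV, List.countP_replicate]

theorem countV_map_pigment (f : M → M) (w : PW M n) (i : Fin n) :
    countV (w.map fun x => (x.1, f x.2)) i = countV w i := by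
  simp [countV, Function.comp_def]

theorem countV_pwSuper [Monoid M] {m : ℕ} (p : PW M n) (q : Fin n → PW M m) (i : Fin m) :
    countV (pwSuper p q) i = ∑ j, countV p j * countV (q j) i := by
  induction p with
  | nil => simp [pwSuper, countV]
  | cons x p ih =>
    rw [pwSuper, List.flatMap_cons, ← pwSuper, countV_append, countV_map_pigment, ih]
    simp only [countV_cons, add_mul, Finset.sum_add_distrib, ite_mul, one_mul, zero_mul,
      Finset.sum_ite_eq, Finset.mem_univ, if_true, add_comm]

def TruncCountEq (k n : ℕ) (p p' : PW M n) : Prop :=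
  ∀ i, min (countV p i) k = min (countV p' i) k

theorem equivalence_truncCountEq (k n : ℕ) : Equivalence (TruncCountEq (M := M) k n) :=
  ⟨fun _ _ => rfl, fun h i => (h i).symm, fun h h' i => (h i).trans (h' i)⟩

theorem isCloneCong_truncCountEq [Monoid M] (k : ℕ) : IsCloneCong (TruncCountEq (M := M) k) := by
  intro n m p p' q q' hp hq i
  rw [countV_pwSuper, countV_pwSuper]
  exact (truncRingCon k).finsetSum _ fun j _ => (truncRingCon k).mul (hp j) (hq j i)

end Counting

section Concatenation

variable {M : Type*} [Monoid M] {m : ℕ}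

theorem pwSuper_pair (a b : PW M m) :
    pwSuper [((0 : Fin 2), (1 : M)), (1, 1)] ![a, b] = a ++ b := by
  simp [pwSuper]

theorem pwSuper_pair_swap (a b : PW M m) :
    pwSuper [((1 : Fin 2), (1 : M)), (0, 1)] ![a, b] = b ++ a := by
  simp [pwSuper]

namespace IsCloneCong

variable {r : ∀ n, PW M n → PW M n → Prop}

theorem append (hC : IsCloneCong r) (hr : ∀ n, Equivalence (r n)) {a a' b b' : PW M m}
    (ha : r m a a') (hb : r m b b') : r m (a ++ b) (a' ++ b') := by
  simpa only [pwSuper_pair] using hC (q := ![a, b]) (q' := ![a', b'])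
    ((hr 2).refl [((0 : Fin 2), (1 : M)), (1, 1)]) (Fin.forall_fin_two.2 ⟨ha, hb⟩)

theorem flatMap {ι : Type*} (hC : IsCloneCong r) (hr : ∀ n, Equivalence (r n)) (l : List ι)
    {f g : ι → PW M m} (h : ∀ x ∈ l, r m (f x) (g x)) : r m (l.flatMap f) (l.flatMap g) := by
  induction l with
  | nil => exact (hr m).refl _
  | cons x l ih =>
    exact hC.append hr (h x List.mem_cons_self) (ih fun y hy => h y (List.mem_cons_of_mem x hy))

theorem append_comm (hC : IsCloneCong r) (hr : ∀ n, Equivalence (r n))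
    (hcomm : r 2 [((0 : Fin 2), 1), (1, 1)] [((1 : Fin 2), 1), (0, 1)]) (a b : PW M m) :
    r m (a ++ b) (b ++ a) := by
  simpa only [pwSuper_pair, pwSuper_pair_swap] using
    hC (q := ![a, b]) (q' := ![a, b]) hcomm fun _ => (hr m).refl _

theorem of_perm (hC : IsCloneCong r) (hr : ∀ n, Equivalence (r n))
    (hcomm : r 2 [((0 : Fin 2), 1), (1, 1)] [((1 : Fin 2), 1), (0, 1)]) {a b : PW M m}
    (h : a.Perm b) : r m a b := by
  induction h with
  | nil => exact (hr m).refl _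
  | cons x _ ih => exact hC.append hr (a := [x]) ((hr m).refl _) ih
  | swap x y l => exact hC.append hr (hC.append_comm hr hcomm [y] [x]) ((hr m).refl l)
  | trans _ _ ih₁ ih₂ => exact (hr m).trans ih₁ ih₂

end IsCloneCong

end Concatenation

section TrivialPigment

variable {m : ℕ}

theorem pwSuper_punit {n : ℕ} (p : PW PUnit.{u + 1} n) (q : Fin n → PW PUnit.{u + 1} m) :
    pwSuper p q = p.flatMap fun x => q x.1 := by
  simp [pwSuper]

theorem pwSuper_replicate_singleton (c : ℕ) (i : Fin m) :
    pwSuper (List.replicate c ((0 : Fin 1), PUnit.unit.{u + 1})) (fun _ => [(i, PUnit.unit)]) =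
      List.replicate c (i, PUnit.unit) := by
  simp [pwSuper_punit, List.flatMap_replicate]

def sortedWord (c : Fin m → ℕ) : PW PUnit.{u + 1} m :=
  (List.finRange m).flatMap fun j => List.replicate (c j) (j, PUnit.unit)

theorem countV_sortedWord (c : Fin m → ℕ) (i : Fin m) : countV (sortedWord.{u} c) i = c i := by
  rw [sortedWord, countV, List.countP_flatMap, Function.comp_def, ← Fin.sum_univ_def]
  simp [List.countP_replicate]

theorem count_eq_countV [BEq (Fin m × PUnit.{u + 1})] [LawfulBEq (Fin m × PUnit.{u + 1})]
    (a : PW PUnit.{u + 1} m) (x : Fin m × PUnit.{u + 1}) : a.count x = countV a x.1 := by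
  rw [List.count_eq_countP, countV]
  exact List.countP_congr fun y _ => by simp [Prod.ext_iff]

theorem perm_sortedWord_countV (a : PW PUnit.{u + 1} m) : a.Perm (sortedWord (countV a)) :=
  List.perm_iff_count.2 fun x => by rw [count_eq_countV, count_eq_countV, countV_sortedWord]

namespace IsCloneCong

variable {r : ∀ n, PW PUnit.{u + 1} n → PW PUnit.{u + 1} n → Prop} {k : ℕ}

theorem replicate_succ (hC : IsCloneCong r) (hr : ∀ n, Equivalence (r n))
    (hred : r 1 (List.replicate (k + 1) (0, PUnit.unit)) (List.replicate k (0, PUnit.unit)))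
    (i : Fin m) :
    r m (List.replicate (k + 1) (i, PUnit.unit)) (List.replicate k (i, PUnit.unit)) := by
  simpa only [pwSuper_replicate_singleton] using
    hC (q := fun _ => [(i, PUnit.unit)]) (q' := fun _ => [(i, PUnit.unit)]) hred
      fun _ => (hr m).refl _

theorem replicate_min (hC : IsCloneCong r) (hr : ∀ n, Equivalence (r n))
    (hred : r 1 (List.replicate (k + 1) (0, PUnit.unit)) (List.replicate k (0, PUnit.unit)))
    (i : Fin m) (c : ℕ) :
    r m (List.replicate c (i, PUnit.unit)) (List.replicate (min c k) (i, PUnit.unit)) := by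
  induction c with
  | zero => exact (hr m).refl _
  | succ c ih =>
    rcases le_or_gt (c + 1) k with hc | hc
    · rw [min_eq_left hc]
      exact (hr m).refl _
    · obtain ⟨d, rfl⟩ : ∃ d, c = k + d := ⟨c - k, by omega⟩
      rw [show min (k + d + 1) k = min (k + d) k by omega]
      refine (hr m).trans ?_ ih
      rw [add_right_comm, List.replicate_add k d, List.replicate_add (k + 1) d]
      exact hC.append hr (hC.replicate_succ hr hred i) ((hr m).refl _)

theorem sortedWord_min (hC : IsCloneCong r) (hr : ∀ n, Equivalence (r n))
    (hcomm : r 2 [((0 : Fin 2), PUnit.unit), (1, PUnit.unit)]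
      [((1 : Fin 2), PUnit.unit), (0, PUnit.unit)])
    (hred : r 1 (List.replicate (k + 1) (0, PUnit.unit)) (List.replicate k (0, PUnit.unit)))
    (a : PW PUnit.{u + 1} m) : r m a (sortedWord fun j => min (countV a j) k) :=
  (hr m).trans (hC.of_perm hr hcomm (perm_sortedWord_countV a))
    (hC.flatMap hr _ fun j _ => hC.replicate_min hr hred j _)

theorem of_truncCountEq (hC : IsCloneCong r) (hr : ∀ n, Equivalence (r n))
    (hcomm : r 2 [((0 : Fin 2), PUnit.unit), (1, PUnit.unit)]
      [((1 : Fin 2), PUnit.unit), (0, PUnit.unit)])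
    (hred : r 1 (List.replicate (k + 1) (0, PUnit.unit)) (List.replicate k (0, PUnit.unit)))
    {p p' : PW PUnit.{u + 1} m} (h : TruncCountEq k m p p') : r m p p' := by
  have hp := hC.sortedWord_min hr hcomm hred p
  rw [show (fun j => min (countV p j) k) = fun j => min (countV p' j) k from funext h] at hp
  exact (hr m).trans hp ((hr m).symm (hC.sortedWord_min hr hcomm hred p'))

end IsCloneCong

end TrivialPigment

/-- Over the trivial monoid `E = PUnit`, the relation `p ≡ p'` iff
`min(|p|_i, k) = min(|p'|_i, k)` for every value `i` is the smallest clone congruence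
of `P(E)` relating `1^e 2^e` with `2^e 1^e` and `(1^e)^{k+1}` with `(1^e)^k`. -/
theorem incK_smallest_cloneCongruence (k : ℕ) :
    (∀ n, Equivalence
      (fun p p' : PW PUnit n => ∀ i, min (countV p i) k = min (countV p' i) k)) ∧
    IsCloneCong
      (fun n (p p' : PW PUnit n) => ∀ i, min (countV p i) k = min (countV p' i) k) ∧
    (∀ i : Fin 2,
      min (countV ([((0 : Fin 2), PUnit.unit), ((1 : Fin 2), PUnit.unit)] : PW PUnit 2) i) k
        = min (countV ([((1 : Fin 2), PUnit.unit), ((0 : Fin 2), PUnit.unit)] : PW PUnit 2) i) k) ∧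
    (∀ i : Fin 1,
      min (countV (List.replicate (k + 1) ((0 : Fin 1), PUnit.unit)) i) k
        = min (countV (List.replicate k ((0 : Fin 1), PUnit.unit)) i) k) ∧
    (∀ r : ∀ n, PW PUnit n → PW PUnit n → Prop,
      (∀ n, Equivalence (r n)) → IsCloneCong r →
      r 2 [((0 : Fin 2), PUnit.unit), ((1 : Fin 2), PUnit.unit)]
        [((1 : Fin 2), PUnit.unit), ((0 : Fin 2), PUnit.unit)] →
      r 1 (List.replicate (k + 1) ((0 : Fin 1), PUnit.unit))
        (List.replicate k ((0 : Fin 1), PUnit.unit)) →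
      ∀ (n : ℕ) (p p' : PW PUnit n),
        (∀ i, min (countV p i) k = min (countV p' i) k) → r n p p') := by
  refine ⟨equivalence_truncCountEq k, isCloneCong_truncCountEq k, ?_, ?_,
    fun r hr hC hcomm hred n p p' h => hC.of_truncCountEq hr hcomm hred h⟩
  · intro i
    fin_cases i <;> rfl
  · intro i
    simp [Fin.fin_one_eq_zero i, countV_replicate]
end

section
/- For any monoid M, the equivalence relation ∼ (the equivalence closure of the union of the rewriting relations ⤳_1, ⤳_2, ⤳_3) is a monoid congruence of the concatenation monoid of M-pigmented words: if q ∼ q' then for every M-pigmented word r, q·r ∼ q'·r and r·q ∼ r·q'. -/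
/-- The value `i` occurs in the word `p`. -/
def hasVal {M : Type*} {n : ℕ} (p : PW M n) (i : Fin n) : Prop := ∃ l ∈ p, l.1 = i

/-- `⤳₁`: delete a letter whose value occurs both before and after it
(a position which is neither a left `1`-witness nor a right `1`-witness). -/
def Step1 {M : Type*} {n : ℕ} (u v : PW M n) : Prop :=
  ∃ (p p' : PW M n) (i : Fin n) (α : M),
    u = p ++ (i, α) :: p' ∧ v = p ++ p' ∧ hasVal p i ∧ hasVal p' i

/-- `⤳₂`: swap two adjacent letters `i₁^{α₁} i₂^{α₂}` with distinct values, where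
`i₁` occurs after, `i₂` occurs before, and `i₂` does not occur after. -/
def Step2 {M : Type*} {n : ℕ} (u v : PW M n) : Prop :=
  ∃ (p p' : PW M n) (i₁ i₂ : Fin n) (α₁ α₂ : M),
    u = p ++ (i₁, α₁) :: (i₂, α₂) :: p' ∧ v = p ++ (i₂, α₂) :: (i₁, α₁) :: p' ∧
    i₁ ≠ i₂ ∧ hasVal p' i₁ ∧ hasVal p i₂ ∧ ¬ hasVal p' i₂

/-- `⤳₃`: contract two equal adjacent letters to one. -/
def Step3 {M : Type*} {n : ℕ} (u v : PW M n) : Prop :=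
  ∃ (p p' : PW M n) (i : Fin n) (α : M),
    u = p ++ (i, α) :: (i, α) :: p' ∧ v = p ++ (i, α) :: p'

/-- The union `⤳₁ ∪ ⤳₂ ∪ ⤳₃`; the relation `∼` is its reflexive, symmetric and
transitive closure `Relation.EqvGen MagnStep`. -/
def MagnStep {M : Type*} {n : ℕ} (u v : PW M n) : Prop := Step1 u v ∨ Step2 u v ∨ Step3 u v

lemma hasVal_appendL {M : Type*} {n : ℕ} {p : PW M n} (r : PW M n) {i : Fin n}
    (h : hasVal p i) : hasVal (p ++ r) i := by
  obtain ⟨l, hl, hli⟩ := h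
  exact ⟨l, List.mem_append_left _ hl, hli⟩

lemma hasVal_appendR {M : Type*} {n : ℕ} (p : PW M n) {r : PW M n} {i : Fin n}
    (h : hasVal r i) : hasVal (p ++ r) i := by
  obtain ⟨l, hl, hli⟩ := h
  exact ⟨l, List.mem_append_right _ hl, hli⟩

lemma hasVal_cons {M : Type*} {n : ℕ} (x : Fin n × M) {p : PW M n} {i : Fin n}
    (h : hasVal p i) : hasVal (x :: p) i := by
  obtain ⟨l, hl, hli⟩ := h
  exact ⟨l, List.mem_cons_of_mem _ hl, hli⟩

lemma magnStep_append_left {M : Type*} {n : ℕ} (u v r : PW M n) (h : MagnStep u v) :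
    Relation.EqvGen MagnStep (r ++ u) (r ++ v) := by
  apply Relation.EqvGen.rel
  rcases h with ⟨p, p', i, α, hu, hv, h1, h2⟩ | ⟨p, p', i₁, i₂, α₁, α₂, hu, hv, hne, h1, h2, h3⟩ |
    ⟨p, p', i, α, hu, hv⟩
  · exact Or.inl ⟨r ++ p, p', i, α, by simp [hu], by simp [hv], hasVal_appendR r h1, h2⟩
  · exact Or.inr (Or.inl ⟨r ++ p, p', i₁, i₂, α₁, α₂, by simp [hu], by simp [hv], hne, h1,
      hasVal_appendR r h2, h3⟩)
  · exact Or.inr (Or.inr ⟨r ++ p, p', i, α, by simp [hu], by simp [hv]⟩)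

lemma magnStep_append_right {M : Type*} {n : ℕ} (u v r : PW M n) (h : MagnStep u v) :
    Relation.EqvGen MagnStep (u ++ r) (v ++ r) := by
  rcases h with ⟨p, p', i, α, hu, hv, h1, h2⟩ | ⟨p, p', i₁, i₂, α₁, α₂, hu, hv, hne, h1, h2, h3⟩ |
    ⟨p, p', i, α, hu, hv⟩
  · exact Relation.EqvGen.rel _ _
      (Or.inl ⟨p, p' ++ r, i, α, by simp [hu], by simp [hv], h1, hasVal_appendL r h2⟩)
  · by_cases hr : hasVal r i₂
    · -- both sides step to p ++ (i₁,α₁) :: (p' ++ r) by deleting (i₂,α₂)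
      have s1 : MagnStep (u ++ r) (p ++ (i₁, α₁) :: (p' ++ r)) :=
        Or.inl ⟨p ++ [(i₁, α₁)], p' ++ r, i₂, α₂, by simp [hu], by simp,
          hasVal_appendL _ h2, hasVal_appendR p' hr⟩
      have s2 : MagnStep (v ++ r) (p ++ (i₁, α₁) :: (p' ++ r)) :=
        Or.inl ⟨p, (i₁, α₁) :: (p' ++ r), i₂, α₂, by simp [hv], by simp, h2,
          hasVal_cons _ (hasVal_appendR p' hr)⟩
      exact (Relation.EqvGen.rel _ _ s1).trans _ _ _ (Relation.EqvGen.rel _ _ s2).symm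
    · refine Relation.EqvGen.rel _ _ (Or.inr (Or.inl ⟨p, p' ++ r, i₁, i₂, α₁, α₂,
        by simp [hu], by simp [hv], hne, hasVal_appendL r h1, h2, ?_⟩))
      rintro ⟨l, hl, hli⟩
      rcases List.mem_append.1 hl with hl | hl
      · exact h3 ⟨l, hl, hli⟩
      · exact hr ⟨l, hl, hli⟩
  · exact Relation.EqvGen.rel _ _
      (Or.inr (Or.inr ⟨p, p' ++ r, i, α, by simp [hu], by simp [hv]⟩))

/-- The equivalence closure `∼` of `⤳₁ ∪ ⤳₂ ∪ ⤳₃` is a monoid congruence of the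
concatenation monoid of `M`-pigmented words. -/
theorem magnStep_eqvGen_monoid_congruence (M : Type*) [Monoid M] (n : ℕ)
    (q q' r : PW M n) (h : Relation.EqvGen MagnStep q q') :
    Relation.EqvGen MagnStep (q ++ r) (q' ++ r) ∧
    Relation.EqvGen MagnStep (r ++ q) (r ++ q') := by
  induction h with
  | rel u v huv =>
      exact ⟨magnStep_append_right u v r huv, magnStep_append_left u v r huv⟩
  | refl u => exact ⟨Relation.EqvGen.refl _, Relation.EqvGen.refl _⟩
  | symm u v _ ih => exact ⟨ih.1.symm, ih.2.symm⟩
  | trans u v w _ _ ih₁ ih₂ =>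
      exact ⟨ih₁.1.trans _ _ _ ih₂.1, ih₁.2.trans _ _ _ ih₂.2⟩
end

section
/- For any monoid M, the relation ≡ defined by p ≡ p' iff first_1(p) = first_1(p') and first_1^R(p) = first_1^R(p') is the smallest clone congruence of P(M) relating 1^e 1^e with 1^e (in arity 1) and relating, for all α_1, α_2, α_3 ∈ M, the word 1^{α_1} 2^e 1^{α_2} 3^e 1^{α_3} with the word 1^{α_1} 2^e 3^e 1^{α_3} (in arity 3): ≡ is a clone congruence relating these pairs, and every clone congruence of P(M) relating all these pairs contains ≡. -/
/-- `firstKR k p` keeps, for each value, the last `k` occurrences of that value in `p`: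
it is the reverse of `firstK k` applied to the reverse of `p`. -/
def firstKR {M : Type*} {n : ℕ} (k : ℕ) (p : PW M n) : PW M n := (firstK k p.reverse).reverse

/-! `first₁ p` is the normal form of `p` for the rewriting that erases a letter whose value
already occurs to its left. This rewriting is compatible with superposition in both arguments
(erasing a repeated letter of `p` erases a block of `p⟨q⟩` all of whose values occur earlier), so
`first₁ (p⟨q⟩)` only depends on `first₁ p` and the `first₁ (q i)`; reversing all words gives the
same for `first₁^R`.

Conversely, a clone congruence containing the two generating pairs relates `p` with `p p`, and,
putting the second pair into context, it may erase any letter whose value occurs both to its left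
and to its right. In `p p` this erases the repeated letters of the first copy and then the
non-last occurrences in the second copy, so `p` is related with `first₁ p · first₁^R p`. -/

namespace PigmentedWord

variable {M : Type*} {n m : ℕ}

open Relation

abbrev vals (p : PW M n) : List (Fin n) := p.map Prod.fst

/-- `α ⊙ p`. -/
def pigmentMul [Mul M] (α : M) (p : PW M n) : PW M n := p.map fun x => (x.1, α * x.2)

@[simp]
lemma vals_pigmentMul [Mul M] (α : M) (p : PW M n) : vals (pigmentMul α p) = vals p := by
  simp [pigmentMul, Function.comp_def]

lemma firstKAux_append (k : ℕ) (pre x y : PW M n) :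
    firstKAux k pre (x ++ y) = firstKAux k pre x ++ firstKAux k (pre ++ x) y := by
  induction x generalizing pre with
  | nil => simp [firstKAux]
  | cons l t ih => simp only [List.cons_append, firstKAux, ih]; split_ifs <;> simp

lemma firstKAux_one_cons (pre : PW M n) (l : Fin n × M) (t : PW M n) :
    firstKAux 1 pre (l :: t) =
      if l.1 ∈ vals pre then firstKAux 1 (pre ++ [l]) t else l :: firstKAux 1 (pre ++ [l]) t := by
  have : pre.countP (fun x => decide (x.1 = l.1)) < 1 ↔ l.1 ∉ vals pre := by
    simp only [Nat.lt_one_iff, List.countP_eq_zero, decide_eq_true_eq, List.mem_map, not_exists,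
      not_and]
  simp only [firstKAux, this]
  split_ifs <;> rfl

lemma firstKAux_one_congr {pre pre' : PW M n} (h : ∀ v, v ∈ vals pre ↔ v ∈ vals pre')
    (p : PW M n) : firstKAux 1 pre p = firstKAux 1 pre' p := by
  induction p generalizing pre pre' with
  | nil => rfl
  | cons l t ih =>
    have h' : ∀ v, v ∈ vals (pre ++ [l]) ↔ v ∈ vals (pre' ++ [l]) := by
      intro v; simp only [List.map_append, List.mem_append, h v]
    simp only [firstKAux_one_cons, h, ih h']

inductive EraseRepeat : PW M n → PW M n → Prop
  | intro (x y : PW M n) (l : Fin n × M) : l.1 ∈ vals x → EraseRepeat (x ++ l :: y) (x ++ y)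

lemma EraseRepeat.firstK_one_eq {p p' : PW M n} (h : EraseRepeat p p') :
    firstK 1 p = firstK 1 p' := by
  obtain ⟨x, y, l, hl⟩ := h
  have hseen : ∀ v, v ∈ vals (x ++ [l]) ↔ v ∈ vals x := by
    intro v
    simp only [List.map_append, List.map_cons, List.map_nil, List.mem_append, List.mem_singleton]
    exact or_iff_left_of_imp fun h => h ▸ hl
  simp only [firstK, firstKAux_append, firstKAux_one_cons, List.nil_append, hl, if_true,
    firstKAux_one_congr hseen]

lemma firstK_one_eq_of_reflTransGen {p p' : PW M n} (h : ReflTransGen EraseRepeat p p') :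
    firstK 1 p = firstK 1 p' := by
  induction h with
  | refl => rfl
  | tail _ hstep ih => exact ih.trans hstep.firstK_one_eq

lemma reflTransGen_firstKAux_one (pre p : PW M n) :
    ReflTransGen EraseRepeat (pre ++ p) (pre ++ firstKAux 1 pre p) := by
  induction p generalizing pre with
  | nil => rfl
  | cons l t ih =>
    have ih' : ReflTransGen EraseRepeat (pre ++ l :: t)
        (pre ++ l :: firstKAux 1 (pre ++ [l]) t) := by
      simpa using ih (pre ++ [l])
    rw [firstKAux_one_cons]
    split_ifs with hl
    · exact ih'.tail (EraseRepeat.intro _ _ _ hl)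
    · exact ih'

lemma reflTransGen_firstK_one (p : PW M n) : ReflTransGen EraseRepeat p (firstK 1 p) :=
  reflTransGen_firstKAux_one [] p

lemma EraseRepeat.append_left {p p' : PW M n} (h : EraseRepeat p p') (z : PW M n) :
    EraseRepeat (z ++ p) (z ++ p') := by
  obtain ⟨x, y, l, hl⟩ := h
  simpa using EraseRepeat.intro (z ++ x) y l (by simp [hl])

lemma EraseRepeat.append_right {p p' : PW M n} (h : EraseRepeat p p') (z : PW M n) :
    EraseRepeat (p ++ z) (p' ++ z) := by
  obtain ⟨x, y, l, hl⟩ := h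
  simpa using EraseRepeat.intro x (y ++ z) l hl

lemma EraseRepeat.map_pigmentMul [Mul M] {p p' : PW M n} (h : EraseRepeat p p') (α : M) :
    EraseRepeat (pigmentMul α p) (pigmentMul α p') := by
  obtain ⟨x, y, l, hl⟩ := h
  simpa [pigmentMul] using
    EraseRepeat.intro (pigmentMul α x) (pigmentMul α y) (l.1, α * l.2) (by simpa using hl)

lemma reflTransGen_append_of_subset (x y z : PW M n) (h : ∀ v ∈ vals y, v ∈ vals x) :
    ReflTransGen EraseRepeat (x ++ y ++ z) (x ++ z) := by
  induction y with
  | nil => simpa using .refl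
  | cons l t ih =>
    simp only [List.map_cons, List.mem_cons, forall_eq_or_imp] at h
    simpa using (ReflTransGen.single (EraseRepeat.intro x (t ++ z) l h.1)).trans
      (by simpa using ih h.2)

lemma EraseRepeat.mem_vals {p p' : PW M n} (h : EraseRepeat p p') {v : Fin n}
    (hv : v ∈ vals p) : v ∈ vals p' := by
  obtain ⟨x, y, l, hl⟩ := h
  simp only [List.map_append, List.map_cons, List.mem_append, List.mem_cons] at hv ⊢
  rcases hv with hv | rfl | hv
  exacts [Or.inl hv, Or.inl hl, Or.inr hv]

lemma mem_vals_of_reflTransGen {p p' : PW M n} (h : ReflTransGen EraseRepeat p p') {v : Fin n}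
    (hv : v ∈ vals p) : v ∈ vals p' := by
  induction h with
  | refl => exact hv
  | tail _ hstep ih => exact hstep.mem_vals ih

def ErasesInnerRepeats (R : PW M n → PW M n → Prop) : Prop :=
  ∀ (x y : PW M n) (l : Fin n × M), l.1 ∈ vals x → l.1 ∈ vals y → R (x ++ l :: y) (x ++ y)

lemma ErasesInnerRepeats.reflTransGen_append {R : PW M n → PW M n → Prop}
    (hR : ErasesInnerRepeats R) {p p' : PW M n} (h : ReflTransGen EraseRepeat p p')
    {z : PW M n} (hz : ∀ v ∈ vals p, v ∈ vals z) : ReflTransGen R (p ++ z) (p' ++ z) := by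
  induction h using ReflTransGen.head_induction_on with
  | refl => rfl
  | head hstep _ ih =>
    obtain ⟨x, y, l, hl⟩ := hstep
    have hly : l.1 ∈ vals (y ++ z) := by
      simp only [List.map_append, List.mem_append]
      exact Or.inr (hz l.1 (by simp))
    refine .head (by simpa using hR x (y ++ z) l hl hly) (ih fun v hv => hz v ?_)
    simp only [List.map_append, List.map_cons, List.mem_append, List.mem_cons] at hv ⊢
    tauto

lemma ErasesInnerRepeats.reverse {R : PW M n → PW M n → Prop} (hR : ErasesInnerRepeats R) :
    ErasesInnerRepeats fun p p' => R p.reverse p'.reverse := by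
  intro x y l hx hy
  simpa using hR y.reverse x.reverse l (by simpa using hy) (by simpa using hx)

lemma ErasesInnerRepeats.reflTransGen_append_left {R : PW M n → PW M n → Prop}
    (hR : ErasesInnerRepeats R) {p p' : PW M n}
    (h : ReflTransGen EraseRepeat p.reverse p'.reverse) {z : PW M n}
    (hz : ∀ v ∈ vals p, v ∈ vals z) : ReflTransGen R (z ++ p) (z ++ p') := by
  have := hR.reverse.reflTransGen_append h (z := z.reverse) (by simpa using hz)
  simpa [Function.onFun] using ReflTransGen.lift List.reverse (fun _ _ h => h) _ _ this

variable [Monoid M]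

@[simp]
lemma pwSuper_nil (q : Fin n → PW M m) : pwSuper [] q = [] := rfl

lemma pwSuper_cons (l : Fin n × M) (t : PW M n) (q : Fin n → PW M m) :
    pwSuper (l :: t) q = pigmentMul l.2 (q l.1) ++ pwSuper t q := rfl

lemma pwSuper_append (x y : PW M n) (q : Fin n → PW M m) :
    pwSuper (x ++ y) q = pwSuper x q ++ pwSuper y q :=
  List.flatMap_append

lemma pwSuper_reverse (p : PW M n) (q : Fin n → PW M m) :
    (pwSuper p q).reverse = pwSuper p.reverse (fun i => (q i).reverse) := by
  induction p with
  | nil => rfl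
  | cons l t ih =>
    simp [pwSuper_cons, pwSuper_append, ih, pigmentMul, List.map_reverse]

lemma mem_vals_pwSuper {p : PW M n} {l : Fin n × M} (hl : l ∈ p) (q : Fin n → PW M m)
    {v : Fin m} (hv : v ∈ vals (q l.1)) : v ∈ vals (pwSuper p q) := by
  obtain ⟨x, y, rfl⟩ := List.append_of_mem hl
  simp [pwSuper_append, pwSuper_cons, hv]

lemma EraseRepeat.reflTransGen_pwSuper {p p' : PW M n} (h : EraseRepeat p p')
    (q : Fin n → PW M m) : ReflTransGen EraseRepeat (pwSuper p q) (pwSuper p' q) := by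
  obtain ⟨x, y, l, hl⟩ := h
  obtain ⟨l', hl', hval⟩ := List.mem_map.1 hl
  simp only [pwSuper_append, pwSuper_cons, ← List.append_assoc]
  refine reflTransGen_append_of_subset _ _ _ fun v hv => mem_vals_pwSuper hl' q ?_
  simpa [hval] using hv

lemma reflTransGen_pwSuper_left {p p' : PW M n} (h : ReflTransGen EraseRepeat p p')
    (q : Fin n → PW M m) : ReflTransGen EraseRepeat (pwSuper p q) (pwSuper p' q) :=
  ReflTransGen.lift' (pwSuper · q) (fun _ _ (h : EraseRepeat _ _) => h.reflTransGen_pwSuper q)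
    _ _ h

lemma reflTransGen_pwSuper_right (p : PW M n) {q q' : Fin n → PW M m}
    (h : ∀ i, ReflTransGen EraseRepeat (q i) (q' i)) :
    ReflTransGen EraseRepeat (pwSuper p q) (pwSuper p q') := by
  induction p with
  | nil => rfl
  | cons l t ih =>
    rw [pwSuper_cons, pwSuper_cons]
    have hblock := ReflTransGen.lift (pigmentMul l.2)
      (fun _ _ (h : EraseRepeat _ _) => h.map_pigmentMul l.2) _ _ (h l.1)
    exact (ReflTransGen.lift (· ++ pwSuper t q)
      (fun _ _ (h : EraseRepeat _ _) => h.append_right _) _ _ hblock).trans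
      (ReflTransGen.lift (_ ++ ·) (fun _ _ (h : EraseRepeat _ _) => h.append_left _) _ _ ih)

lemma firstK_one_pwSuper (p : PW M n) (q : Fin n → PW M m) :
    firstK 1 (pwSuper p q) = firstK 1 (pwSuper (firstK 1 p) fun i => firstK 1 (q i)) :=
  firstK_one_eq_of_reflTransGen <| (reflTransGen_pwSuper_left (reflTransGen_firstK_one p) q).trans
    (reflTransGen_pwSuper_right _ fun i => reflTransGen_firstK_one (q i))

lemma firstK_one_pwSuper_congr {p p' : PW M n} {q q' : Fin n → PW M m}
    (hp : firstK 1 p = firstK 1 p') (hq : ∀ i, firstK 1 (q i) = firstK 1 (q' i)) :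
    firstK 1 (pwSuper p q) = firstK 1 (pwSuper p' q') := by
  rw [firstK_one_pwSuper, firstK_one_pwSuper p', hp, funext hq]

lemma firstKR_one_pwSuper_congr {p p' : PW M n} {q q' : Fin n → PW M m}
    (hp : firstKR 1 p = firstKR 1 p') (hq : ∀ i, firstKR 1 (q i) = firstKR 1 (q' i)) :
    firstKR 1 (pwSuper p q) = firstKR 1 (pwSuper p' q') := by
  simp only [firstKR, List.reverse_inj] at hp hq ⊢
  rw [pwSuper_reverse, pwSuper_reverse]
  exact firstK_one_pwSuper_congr hp hq

variable {r : ∀ k, PW M k → PW M k → Prop}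

theorem _root_.IsCloneCong.rel_append_append (hCC : IsCloneCong r)
    (hrefl : ∀ k (p : PW M k), r k p p)
    {a b : PW M m} (h : r m a b) (x y : PW M m) : r m (x ++ a ++ y) (x ++ b ++ y) := by
  have := hCC (p := [(0, 1), (1, 1), (2, 1)]) (hrefl 3 _) (q := ![x, a, y]) (q' := ![x, b, y])
    (by intro i; fin_cases i <;> simp [h, hrefl m _])
  simpa [pwSuper_cons, pigmentMul] using this

theorem _root_.IsCloneCong.rel_append_self (hCC : IsCloneCong r)
    (hrefl : ∀ k (p : PW M k), r k p p)
    (hdup : r 1 [(0, 1), (0, 1)] [(0, 1)]) (p : PW M m) : r m (p ++ p) p := by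
  simpa [pwSuper_cons, pigmentMul] using
    hCC hdup (q := fun _ => p) (q' := fun _ => p) fun _ => hrefl m p

theorem _root_.IsCloneCong.erasesInnerRepeats (hCC : IsCloneCong r)
    (hrefl : ∀ k (p : PW M k), r k p p)
    (hmid : ∀ α₁ α₂ α₃ : M, r 3 [(0, α₁), (1, 1), (0, α₂), (2, 1), (0, α₃)]
      [(0, α₁), (1, 1), (2, 1), (0, α₃)]) :
    ErasesInnerRepeats (r m) := by
  rintro x y ⟨v, α⟩ hx hy
  obtain ⟨⟨v₁, δ⟩, hδ, hv₁ : v₁ = v⟩ := List.mem_map.1 hx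
  obtain ⟨⟨v₂, ε⟩, hε, hv₂ : v₂ = v⟩ := List.mem_map.1 hy
  subst v₁ v₂
  obtain ⟨x₁, x₂, rfl⟩ := List.append_of_mem hδ
  obtain ⟨y₁, y₂, rfl⟩ := List.append_of_mem hε
  have hinner := hCC (hmid δ α ε) (q := ![[(v, 1)], x₂, y₁]) (q' := ![[(v, 1)], x₂, y₁])
    fun _ => hrefl m _
  simpa [pwSuper_cons, pigmentMul] using
    hCC.rel_append_append hrefl hinner x₁ y₂

theorem _root_.IsCloneCong.rel_firstK_one_append_firstKR_one (hCC : IsCloneCong r)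
    (hEq : ∀ k, Equivalence (r k)) (hdup : r 1 [(0, 1), (0, 1)] [(0, 1)])
    (hmid : ∀ α₁ α₂ α₃ : M, r 3 [(0, α₁), (1, 1), (0, α₂), (2, 1), (0, α₃)]
      [(0, α₁), (1, 1), (2, 1), (0, α₃)]) (p : PW M m) :
    r m p (firstK 1 p ++ firstKR 1 p) := by
  have hrefl : ∀ k (p : PW M k), r k p p := fun k => (hEq k).refl
  have hR : ErasesInnerRepeats (r m) := hCC.erasesInnerRepeats hrefl hmid
  have hfirst : ReflTransGen (r m) (p ++ p) (firstK 1 p ++ p) :=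
    hR.reflTransGen_append (reflTransGen_firstK_one p) fun _ hv => hv
  have hlast : ReflTransGen (r m) (firstK 1 p ++ p) (firstK 1 p ++ firstKR 1 p) :=
    hR.reflTransGen_append_left (by simpa [firstKR] using reflTransGen_firstK_one p.reverse)
      fun _ hv => mem_vals_of_reflTransGen (reflTransGen_firstK_one p) hv
  exact (hEq m).trans ((hEq m).symm (hCC.rel_append_self hrefl hdup p))
    ((hEq m).eqvGen_iff.1 (EqvGen.reflTransGen_le_eqvGen (r := r m) _ _ (hfirst.trans hlast)))

end PigmentedWord

open PigmentedWord in
/-- The relation `p ≡ p'` iff `first₁(p) = first₁(p')` and `first₁^R(p) = first₁^R(p')`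
is the smallest clone congruence of `P(M)` relating `1^e 1^e` with `1^e` and, for all
`α₁, α₂, α₃ ∈ M`, relating `1^{α₁} 2^e 1^{α₂} 3^e 1^{α₃}` with `1^{α₁} 2^e 3^e 1^{α₃}`. -/
theorem magn_smallest_cloneCongruence (M : Type*) [Monoid M] :
    (∀ n, Equivalence (fun p p' : PW M n =>
      firstK 1 p = firstK 1 p' ∧ firstKR 1 p = firstKR 1 p')) ∧
    IsCloneCong (fun n (p p' : PW M n) =>
      firstK 1 p = firstK 1 p' ∧ firstKR 1 p = firstKR 1 p') ∧
    (firstK 1 ([((0 : Fin 1), (1 : M)), ((0 : Fin 1), (1 : M))] : PW M 1)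
        = firstK 1 ([((0 : Fin 1), (1 : M))] : PW M 1) ∧
      firstKR 1 ([((0 : Fin 1), (1 : M)), ((0 : Fin 1), (1 : M))] : PW M 1)
        = firstKR 1 ([((0 : Fin 1), (1 : M))] : PW M 1)) ∧
    (∀ α₁ α₂ α₃ : M,
      firstK 1 ([((0 : Fin 3), α₁), ((1 : Fin 3), (1 : M)), ((0 : Fin 3), α₂),
          ((2 : Fin 3), (1 : M)), ((0 : Fin 3), α₃)] : PW M 3)
        = firstK 1 ([((0 : Fin 3), α₁), ((1 : Fin 3), (1 : M)),
          ((2 : Fin 3), (1 : M)), ((0 : Fin 3), α₃)] : PW M 3) ∧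
      firstKR 1 ([((0 : Fin 3), α₁), ((1 : Fin 3), (1 : M)), ((0 : Fin 3), α₂),
          ((2 : Fin 3), (1 : M)), ((0 : Fin 3), α₃)] : PW M 3)
        = firstKR 1 ([((0 : Fin 3), α₁), ((1 : Fin 3), (1 : M)),
          ((2 : Fin 3), (1 : M)), ((0 : Fin 3), α₃)] : PW M 3)) ∧
    (∀ r : ∀ n, PW M n → PW M n → Prop, (∀ n, Equivalence (r n)) → IsCloneCong r →
      r 1 [((0 : Fin 1), (1 : M)), ((0 : Fin 1), (1 : M))] [((0 : Fin 1), (1 : M))] →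
      (∀ α₁ α₂ α₃ : M,
        r 3 [((0 : Fin 3), α₁), ((1 : Fin 3), (1 : M)), ((0 : Fin 3), α₂),
            ((2 : Fin 3), (1 : M)), ((0 : Fin 3), α₃)]
          [((0 : Fin 3), α₁), ((1 : Fin 3), (1 : M)),
            ((2 : Fin 3), (1 : M)), ((0 : Fin 3), α₃)]) →
      ∀ (n : ℕ) (p p' : PW M n),
        (firstK 1 p = firstK 1 p' ∧ firstKR 1 p = firstKR 1 p') → r n p p') := by
  refine ⟨fun n => ⟨fun _ => ⟨rfl, rfl⟩, fun h => ⟨h.1.symm, h.2.symm⟩,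
      fun h h' => ⟨h.1.trans h'.1, h.2.trans h'.2⟩⟩,
    fun n m p p' q q' hp hq => ⟨firstK_one_pwSuper_congr hp.1 fun i => (hq i).1,
      firstKR_one_pwSuper_congr hp.2 fun i => (hq i).2⟩,
    by simp [firstKR, firstK, firstKAux], fun _ _ _ => by simp [firstKR, firstK, firstKAux], ?_⟩
  intro r hEq hCC hdup hmid n p p' ⟨hfirst, hlast⟩
  have hp := hCC.rel_firstK_one_append_firstKR_one hEq hdup hmid p
  have hp' := hCC.rel_firstK_one_append_firstKR_one hEq hdup hmid p'
  rw [hfirst, hlast] at hp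
  exact (hEq n).trans hp ((hEq n).symm hp')
end
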